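/- For |q|<1 and parameters in the region of validity, ₁φ₁ satisfies ₁φ₁(aq²; cq²; q, x) = [(1−cq)(c−ax)((1−c)q + x) / ((1−aq)x)] · ₁φ₁(aq; cq; q, xq) − [(1−c)(1−cq)(cq − x) / ((1−aq)x)] · ₁φ₁(a; c; q, x). -/

import Mathlib

open scoped BigOperators

/-- q-shifted factorial (a;q)_j -/
noncomputable def qPoch (a q : ℂ) (j : ℕ) : ℂ :=
  ∏ i ∈ Finset.range j, (1 - a * q ^ i)

/-- infinite q-shifted factorial (a;q)_∞ -/
noncomputable def qPochInf (a q : ℂ) : ℂ :=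
  ∏' j : ℕ, (1 - a * q ^ j)

/-- basic hypergeometric series ₁φ₁(a; c; q, x) -/
noncomputable def phi11 (a c q x : ℂ) : ℂ :=
  ∑' j : ℕ, qPoch a q j / (qPoch q q j * qPoch c q j) *
    (-1) ^ j * q ^ (j * (j - 1) / 2) * x ^ j

/-- basic hypergeometric series ₀φ₁(–; c; q, x) -/
noncomputable def phi01 (c q x : ℂ) : ℂ :=
  ∑' j : ℕ, q ^ (j * (j - 1)) * x ^ j / (qPoch q q j * qPoch c q j)

/-- basic hypergeometric series ₂φ₁(a, b; c; q, x) -/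
noncomputable def phi21 (a b c q x : ℂ) : ℂ :=
  ∑' j : ℕ, qPoch a q j * qPoch b q j / (qPoch q q j * qPoch c q j) * x ^ j

/-!
Multiplied by `(1 - a q) x`, and with `(c - a x)((1 - c) q + x)` expanded in powers of `x`,
the claim becomes `∑ fₙ + ∑ gₙ + ∑ hₙ = 0`, where `f`, `g`, `h` are linear combinations of the
terms of the three series, with coefficients of degree `0`, `1`, `2` in `x`. Since the `n`-th
term carries `xⁿ`, it suffices that `f (n + 2) + g (n + 1) + h n = 0` for all `n`, together with
`f 0 = 0` and `f 1 + g 0 = 0`. Each term entering `f (n + 2) + g (n + 1) + h n` is a rational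
function of `qⁿ` times the `n`-th term of `₁φ₁(aq; cq; q, x)`, so this is an identity of rational
functions. The series converge for every `x` because the ratio of consecutive terms is `O(qⁿ)`.
-/

open Filter Topology

theorem HasSum.add_add_eq_zero_of_shift {α : Type*} [AddCommGroup α] [TopologicalSpace α]
    [IsTopologicalAddGroup α] [T2Space α] {f g h : ℕ → α} {F G H : α}
    (hf : HasSum f F) (hg : HasSum g G) (hh : HasSum h H) (h0 : f 0 = 0) (h1 : f 1 + g 0 = 0)
    (hrec : ∀ n, f (n + 2) + g (n + 1) + h n = 0) : F + G + H = 0 := by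
  have hsum := (((hasSum_nat_add_iff' 2).mpr hf).add ((hasSum_nat_add_iff' 1).mpr hg)).add hh
  simp only [hrec, Finset.sum_range_succ, Finset.sum_range_zero, h0] at hsum
  calc F + G + H = (F - (0 + 0 + f 1) + (G - (0 + g 0)) + H) + (f 1 + g 0) := by abel
    _ = 0 := by rw [hsum.unique hasSum_zero, h1, add_zero]

noncomputable def phi11Term (a c q x : ℂ) (j : ℕ) : ℂ :=
  qPoch a q j / (qPoch q q j * qPoch c q j) * (-1) ^ j * q ^ (j * (j - 1) / 2) * x ^ j

theorem qPoch_zero (a q : ℂ) : qPoch a q 0 = 1 := Finset.prod_range_zero _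

theorem qPoch_succ (a q : ℂ) (n : ℕ) : qPoch a q (n + 1) = qPoch a q n * (1 - a * q ^ n) :=
  Finset.prod_range_succ _ _

theorem qPoch_succ' (a q : ℂ) (n : ℕ) : qPoch a q (n + 1) = (1 - a) * qPoch (a * q) q n := by
  simp only [qPoch, Finset.prod_range_succ', pow_zero, mul_one, pow_succ, mul_assoc, mul_comm]

theorem phi11Term_zero (a c q x : ℂ) : phi11Term a c q x 0 = 1 := by
  simp [phi11Term, qPoch_zero]

theorem phi11Term_succ (a c q x : ℂ) (n : ℕ) :
    phi11Term a c q x (n + 1) =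
      -((1 - a * q ^ n) * q ^ n * x / ((1 - q ^ (n + 1)) * (1 - c * q ^ n))) *
        phi11Term a c q x n := by
  simp only [phi11Term, qPoch_succ, Nat.triangle_succ, pow_add, pow_succ, div_eq_mul_inv, mul_inv]
  ring

theorem phi11Term_succ_eq_shift (a c q x : ℂ) (n : ℕ) :
    phi11Term a c q x (n + 1) =
      -((1 - a) * x / ((1 - c) * (1 - q ^ (n + 1)))) * phi11Term (a * q) (c * q) q (x * q) n := by
  simp only [phi11Term, qPoch_succ' a, qPoch_succ' c, qPoch_succ q, Nat.triangle_succ, pow_add,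
    pow_succ, mul_pow, div_eq_mul_inv, mul_inv]
  ring

theorem phi11Term_arg_mul_q (a c q x : ℂ) (n : ℕ) :
    phi11Term a c q (x * q) n = q ^ n * phi11Term a c q x n := by
  simp only [phi11Term, mul_pow]
  ring

theorem qPoch_mul_q {a : ℂ} (ha : a ≠ 1) (q : ℂ) (n : ℕ) :
    qPoch (a * q) q n = qPoch a q n * (1 - a * q ^ n) / (1 - a) := by
  rw [eq_div_iff (sub_ne_zero.mpr ha.symm), ← qPoch_succ, qPoch_succ', mul_comm]

theorem phi11Term_params_mul_q {a c : ℂ} (ha : a ≠ 1) (hc : c ≠ 1) (q x : ℂ) (n : ℕ) :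
    phi11Term (a * q) (c * q) q x n =
      (1 - c) * (1 - a * q ^ n) / ((1 - a) * (1 - c * q ^ n)) * phi11Term a c q x n := by
  simp only [phi11Term, qPoch_mul_q ha, qPoch_mul_q hc, div_eq_mul_inv, mul_inv, inv_inv]
  ring

theorem pow_succ_ne_one_of_norm_lt_one {R : Type*} [NormedDivisionRing R] {q : R} (hq : ‖q‖ < 1)
    (k : ℕ) : q ^ (k + 1) ≠ 1 := fun h =>
  (pow_lt_one₀ (norm_nonneg q) hq k.succ_ne_zero).ne (by rw [← norm_pow, h, norm_one])

theorem summable_phi11Term {q : ℂ} (hq : ‖q‖ < 1) (a c x : ℂ) :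
    Summable (phi11Term a c q x) := by
  have hratio : Tendsto (fun n : ℕ =>
      (1 - a * q ^ n) * q ^ n * x / ((1 - q ^ (n + 1)) * (1 - c * q ^ n))) atTop (𝓝 0) := by
    have hcont : ContinuousAt
        (fun z : ℂ => (1 - a * z) * z * x / ((1 - q * z) * (1 - c * z))) 0 :=
      ContinuousAt.div (by fun_prop) (by fun_prop) (by simp)
    simpa [Function.comp_def, pow_succ'] using
      hcont.tendsto.comp (tendsto_pow_atTop_nhds_zero_of_norm_lt_one hq)
  refine summable_of_ratio_norm_eventually_le (r := 1 / 2) (by norm_num) ?_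
  filter_upwards [(norm_zero (E := ℂ) ▸ hratio.norm).eventually_le_const
    (by norm_num : (0 : ℝ) < 1 / 2)] with n hn
  rw [phi11Term_succ, norm_mul, norm_neg]
  exact mul_le_mul_of_nonneg_right hn (norm_nonneg _)

theorem hasSum_phi11 {q : ℂ} (hq : ‖q‖ < 1) (a c x : ℂ) :
    HasSum (phi11Term a c q x) (phi11 a c q x) :=
  (summable_phi11Term hq a c x).hasSum

theorem phi11Term_three_term_recurrence {q c : ℂ} (hq : ‖q‖ < 1) (hc : ∀ n : ℕ, c * q ^ n ≠ 1)
    {a : ℂ} (ha : a * q ≠ 1) (x : ℂ) (n : ℕ) :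
    ((1 - c * q) * c * (1 - c) * q * phi11Term (a * q) (c * q) q (x * q) (n + 2)
        - (1 - c) * (1 - c * q) * c * q * phi11Term a c q x (n + 2))
      + ((1 - c * q) * (c - a * (1 - c) * q) * x * phi11Term (a * q) (c * q) q (x * q) (n + 1)
        + (1 - c) * (1 - c * q) * x * phi11Term a c q x (n + 1)
        - (1 - a * q) * x * phi11Term (a * q ^ 2) (c * q ^ 2) q x (n + 1))
      + -((1 - c * q) * a * x ^ 2) * phi11Term (a * q) (c * q) q (x * q) n = 0 := by
  rw [phi11Term_succ_eq_shift a c q x (n + 1), phi11Term_succ_eq_shift a c q x n]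
  simp only [phi11Term_arg_mul_q (a * q) (c * q) q x, phi11Term_succ]
  rw [show a * q ^ 2 = a * q * q by ring, show c * q ^ 2 = c * q * q by ring,
    phi11Term_params_mul_q ha (by simpa using hc 1)]
  simp only [pow_succ', ← mul_assoc, show n + 2 = n + 1 + 1 from rfl]
  have hq1 : 1 - q * q ^ n ≠ 0 := by
    rw [← pow_succ']; exact sub_ne_zero_of_ne (pow_succ_ne_one_of_norm_lt_one hq n).symm
  have hq2 : 1 - q ^ 2 * q ^ n ≠ 0 := by
    rw [← pow_add, add_comm]
    exact sub_ne_zero_of_ne (pow_succ_ne_one_of_norm_lt_one hq (n + 1)).symm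
  have hc0 : 1 - c ≠ 0 := sub_ne_zero_of_ne (Ne.symm (by simpa using hc 0))
  have hcq1 : 1 - c * q * q ^ n ≠ 0 := by
    rw [mul_assoc, ← pow_succ']; exact sub_ne_zero_of_ne (hc (n + 1)).symm
  have hcq2 : 1 - c * q ^ 2 * q ^ n ≠ 0 := by
    rw [mul_assoc, ← pow_add, add_comm]; exact sub_ne_zero_of_ne (hc (n + 2)).symm
  have haq : 1 - q * a ≠ 0 := sub_ne_zero_of_ne (mul_comm a q ▸ ha).symm
  field_simp
  ring

theorem phi11_three_term_recurrence_mixed (q a c x : ℂ) (hq : ‖q‖ < 1)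
    (hc : ∀ n : ℕ, c * q ^ n ≠ 1)
    (ha : a * q ≠ 1) (hx : x ≠ 0) :
    phi11 (a * q ^ 2) (c * q ^ 2) q x
      = (1 - c * q) * (c - a * x) * ((1 - c) * q + x) / ((1 - a * q) * x)
          * phi11 (a * q) (c * q) q (x * q)
        - (1 - c) * (1 - c * q) * (c * q - x) / ((1 - a * q) * x)
          * phi11 a c q x := by
  have hA := hasSum_phi11 hq a c x
  have hB := hasSum_phi11 hq (a * q) (c * q) (x * q)
  have hW := hasSum_phi11 hq (a * q ^ 2) (c * q ^ 2) x
  have hsum := HasSum.add_add_eq_zero_of_shift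
    ((hB.mul_left ((1 - c * q) * c * (1 - c) * q)).sub
      (hA.mul_left ((1 - c) * (1 - c * q) * c * q)))
    (((hB.mul_left ((1 - c * q) * (c - a * (1 - c) * q) * x)).add
      (hA.mul_left ((1 - c) * (1 - c * q) * x))).sub (hW.mul_left ((1 - a * q) * x)))
    (hB.mul_left (-((1 - c * q) * a * x ^ 2)))
    (by simp only [phi11Term_zero]; ring) ?_ (phi11Term_three_term_recurrence hq hc ha x)
  · rw [div_mul_eq_mul_div, div_mul_eq_mul_div, div_sub_div_same,
      eq_div_iff (mul_ne_zero (sub_ne_zero_of_ne ha.symm) hx)]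
    linear_combination -hsum
  · have hq1 : 1 - q ≠ 0 :=
      sub_ne_zero_of_ne (Ne.symm (by simpa using pow_succ_ne_one_of_norm_lt_one hq 0))
    have hc0 : 1 - c ≠ 0 := sub_ne_zero_of_ne (Ne.symm (by simpa using hc 0))
    have hc1 : 1 - c * q ≠ 0 := sub_ne_zero_of_ne (Ne.symm (by simpa using hc 1))
    simp only [phi11Term_succ, phi11Term_zero, zero_add, pow_zero, pow_one, mul_one]
    field_simp
    ring
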